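/- Let G be a finite undirected graph with disjoint vertex sets S and T and drainage Z_1,...,Z_k, with fixed Menger's paths and associated mixed graph G_D. Then every dam B_i ⊆ Z_i has a unique closest dam: either B_i is itself a closest dam, or there is exactly one closest dam B_h (h < i) that is closer than B_i. -/

import Mathlib

open SimpleGraph

variable {V : Type*}

/-- `X` is an edge `(S,T)`-cut: after deleting the edges of `X`,
no vertex of `S` can reach a vertex of `T`. -/
def EdgeCut (G : SimpleGraph V) (S T : Set V) (X : Finset (Sym2 V)) : Prop :=
  ∀ s ∈ S, ∀ t ∈ T, ¬ (G.deleteEdges ↑X).Reachable s t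

/-- `X` is a minimum edge `(S,T)`-cut. -/
def MinEdgeCut (G : SimpleGraph V) (S T : Set V) (X : Finset (Sym2 V)) : Prop :=
  EdgeCut G S T X ∧ ∀ Y : Finset (Sym2 V), EdgeCut G S T Y → X.card ≤ Y.card

/-- `R(X,S)`: vertices reachable from `S` in `G` deprived of the edges of `X`. -/
def Rside (G : SimpleGraph V) (X : Finset (Sym2 V)) (S : Set V) : Set V :=
  {v | ∃ s ∈ S, (G.deleteEdges ↑X).Reachable s v}

/-- A minimum closest `(S,T)`-cut: a minimum cut `Z` such that no other cut `X'`
satisfies `|X'| ≤ |Z|` and `R(X',S) ⊆ R(Z,S)`. -/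
def MinClosestCut (G : SimpleGraph V) (S T : Set V) (Z : Finset (Sym2 V)) : Prop :=
  MinEdgeCut G S T Z ∧
    ∀ X' : Finset (Sym2 V), EdgeCut G S T X' → X' ≠ Z →
      ¬ (X'.card ≤ Z.card ∧ Rside G X' S ⊆ Rside G Z S)

/-- `G` deprived of the vertex set `U` (kept on the same vertex type). -/
def deprive (G : SimpleGraph V) (U : Set V) : SimpleGraph V where
  Adj u v := G.Adj u v ∧ u ∉ U ∧ v ∉ U
  symm := ⟨fun _ _ ⟨h, hu, hv⟩ => ⟨h.symm, hv, hu⟩⟩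
  loopless := ⟨fun _ ⟨h, _, _⟩ => G.ne_of_adj h rfl⟩

/-- `V^T(Z)` relative to sources `S`: the endpoints of edges of `Z` that are not
reachable from `S` once `Z` is removed. -/
def nextSources (G : SimpleGraph V) (Z : Finset (Sym2 V)) (S : Set V) : Set V :=
  {v | v ∉ Rside G Z S ∧ ∃ u, s(u, v) ∈ Z}

/-- The drainage `Z 1, ..., Z k` of the instance `(G,S,T)` with minimum cut size `p`:
`Z 1` is the minimum closest `(S,T)`-cut, and `Z (i+1)` is the minimum closest
`(S_{i+1},T)`-cut of size `p` in `G` deprived of `R(Z i, S)`; the construction stops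
at `k`, when no further cut of size `p` exists. -/
def IsDrainage (G : SimpleGraph V) (S T : Set V) (p k : ℕ)
    (Z : ℕ → Finset (Sym2 V)) : Prop :=
  1 ≤ k ∧
  MinClosestCut G S T (Z 1) ∧ (Z 1).card = p ∧
  (∀ i, 1 ≤ i → i < k →
    MinClosestCut (deprive G (Rside G (Z i) S)) (nextSources G (Z i) S) T (Z (i + 1)) ∧
      (Z (i + 1)).card = p) ∧
  (∀ X : Finset (Sym2 V),
    EdgeCut (deprive G (Rside G (Z k) S)) (nextSources G (Z k) S) T X → p < X.card)

/-- A family of `p` pairwise edge-disjoint `(S,T)`-paths (Menger's paths). -/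
structure MengerFamily (G : SimpleGraph V) (S T : Set V) (p : ℕ) where
  a : Fin p → V
  b : Fin p → V
  ha : ∀ j, a j ∈ S
  hb : ∀ j, b j ∈ T
  walk : ∀ j, G.Walk (a j) (b j)
  isPath : ∀ j, (walk j).IsPath
  edgeDisj : ∀ i j, i ≠ j → ∀ e, e ∈ (walk i).edges → e ∉ (walk j).edges

namespace MengerFamily

variable {G : SimpleGraph V} {S T : Set V} {p : ℕ}

/-- Arc of the mixed graph `G_D`: `(u,v)` is traversed in this direction by some
Menger path (oriented from `S` to `T`). -/
def Arc (M : MengerFamily G S T p) (u v : V) : Prop :=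
  ∃ j, ∃ d ∈ (M.walk j).darts, d.toProd = (u, v)

/-- Edges lying on some Menger path. -/
def pathEdge (M : MengerFamily G S T p) (e : Sym2 V) : Prop :=
  ∃ j, e ∈ (M.walk j).edges

/-- One step of reachability in the mixed graph `G_D` deprived of the dam `B`:
follow an arc in its direction, or an undirected edge in either direction. -/
def step (M : MengerFamily G S T p) (B : Finset (Sym2 V)) (u v : V) : Prop :=
  (M.Arc u v ∨ (G.Adj u v ∧ ¬ M.pathEdge s(u, v))) ∧ s(u, v) ∉ B

/-- Dry area `A*(B)`: the vertices not reachable from `S` in `G_D \ B`. -/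
def dryArea (M : MengerFamily G S T p) (B : Finset (Sym2 V)) : Set V :=
  {v | ¬ ∃ s ∈ S, Relation.ReflTransGen (M.step B) s v}

/-- Signature `σ(B)`: the set of Menger paths meeting `B`. -/
def sig (M : MengerFamily G S T p) (B : Finset (Sym2 V)) : Set (Fin p) :=
  {j | ∃ e ∈ B, e ∈ (M.walk j).edges}

/-- `S*(B)`: the tails of the arcs of `B`. -/
def Sstar (M : MengerFamily G S T p) (B : Finset (Sym2 V)) : Set V :=
  {u | ∃ v, M.Arc u v ∧ s(u, v) ∈ B}

/-- `T*(B)`: heads, outside the dry area, of edges leaving `S*(B) ∪ A*(B)`. -/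
def Tstar (M : MengerFamily G S T p) (B : Finset (Sym2 V)) : Set V :=
  {v | v ∉ M.dryArea B ∧ ∃ u ∈ M.Sstar B ∪ M.dryArea B, G.Adj u v}

/-- `V*(B) = S*(B) ∪ A*(B) ∪ T*(B)`. -/
def Vstar (M : MengerFamily G S T p) (B : Finset (Sym2 V)) : Set V :=
  M.Sstar B ∪ M.dryArea B ∪ M.Tstar B

/-- `E*(B)`: edges with both endpoints in `V*(B)`, at least one of them in `A*(B)`. -/
def Estar (M : MengerFamily G S T p) (B : Finset (Sym2 V)) : Set (Sym2 V) :=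
  {e | ∃ u v, e = s(u, v) ∧ G.Adj u v ∧ u ∈ M.dryArea B ∧ v ∈ M.Vstar B}

/-- The graph `G*(B)` of the dry instance `D(I,B)`. -/
def Gstar (M : MengerFamily G S T p) (B : Finset (Sym2 V)) : SimpleGraph V where
  Adj u v := G.Adj u v ∧ s(u, v) ∈ M.Estar B
  symm := ⟨fun _ _ ⟨h, he⟩ => ⟨h.symm, by rwa [Sym2.eq_swap]⟩⟩
  loopless := ⟨fun _ ⟨h, _⟩ => G.ne_of_adj h rfl⟩

end MengerFamily

/-- A dam of the drainage `Z` (of length `k`): a nonempty subset of some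
minimum drainage cut `Z i`. -/
def IsDam (Z : ℕ → Finset (Sym2 V)) (k i : ℕ) (B : Finset (Sym2 V)) : Prop :=
  1 ≤ i ∧ i ≤ k ∧ B ⊆ Z i ∧ B.Nonempty

/-- `B_h` (of level `h`) is closer than the dam `B_i` (of level `i`). -/
def Closer {G : SimpleGraph V} {S T : Set V} {p : ℕ} (M : MengerFamily G S T p)
    (Z : ℕ → Finset (Sym2 V)) (h i : ℕ) (Bh Bi : Finset (Sym2 V)) : Prop :=
  h < i ∧ M.sig Bh = M.sig Bi ∧ M.Estar Bh ∩ ↑(Z i) = ↑Bi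

/-- A closest dam: a dam such that no dam is closer than it. -/
def ClosestDam {G : SimpleGraph V} {S T : Set V} {p : ℕ} (M : MengerFamily G S T p)
    (Z : ℕ → Finset (Sym2 V)) (k i : ℕ) (B : Finset (Sym2 V)) : Prop :=
  IsDam Z k i B ∧ ¬ ∃ h Bh, IsDam Z k h Bh ∧ Closer M Z h i Bh B

/-!
Each Menger path crosses every drainage cut `Z m` in exactly one edge, leaving `R(Z m, S)`
there, and it crosses the cuts in the order of their levels. Hence a dam is determined by its
level and signature, and "closer than" is transitive and interpolates: if `B₁` and `B₂` are both
closer than `Bᵢ` and `B₁` has the lower level, then `B₁` is closer than `B₂`. The dam of least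
level closer than `B` is therefore the unique closest dam below `B`.
-/

theorem Finset.card_eq_one_and_biUnion_eq_of_pairwiseDisjoint {ι α : Type*} [Fintype ι]
    [DecidableEq α] {X : Finset α} {E : ι → Finset α} (hsub : ∀ i, E i ⊆ X)
    (hne : ∀ i, (E i).Nonempty) (hdisj : (Set.univ : Set ι).PairwiseDisjoint E)
    (hX : X.card ≤ Fintype.card ι) :
    (∀ i, (E i).card = 1) ∧ Finset.univ.biUnion E = X := by
  have hU : Finset.univ.biUnion E ⊆ X := Finset.biUnion_subset.2 fun i _ => hsub i
  have hsum : ∑ i, (E i).card = (Finset.univ.biUnion E).card :=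
    (Finset.card_biUnion (by simpa using hdisj)).symm
  have hones : ∑ _i : ι, 1 = Fintype.card ι := by simp
  have hle : ∑ i, (E i).card ≤ ∑ _i : ι, 1 :=
    calc ∑ i, (E i).card = (Finset.univ.biUnion E).card := hsum
      _ ≤ X.card := Finset.card_le_card hU
      _ ≤ ∑ _i : ι, 1 := hones ▸ hX
  have hge : ∑ _i : ι, 1 ≤ ∑ i, (E i).card :=
    Finset.sum_le_sum fun i _ => (hne i).card_pos
  refine ⟨fun i => ?_, Finset.eq_of_subset_of_card_le hU ?_⟩
  · exact ((Finset.sum_eq_sum_iff_of_le fun i _ => (hne i).card_pos).1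
      (le_antisymm hge hle) i (Finset.mem_univ i)).symm
  · omega

theorem existsUnique_minimal_of_graded {α : Type*} (P : α → Prop) (r : α → α → Prop)
    (f : α → ℕ) (hf : ∀ a b, r a b → f a < f b)
    (htrans : ∀ a b c, P a → P b → P c → r a b → r b c → r a c)
    (hinterp : ∀ a b c, P a → P b → P c → r a c → r b c → f a < f b → r a b)
    (hinj : ∀ a b c, P a → P b → P c → r a c → r b c → f a = f b → a = b)
    {c : α} (hc : P c) :
    ∃! a, (P a ∧ ¬ ∃ b, P b ∧ r b a) ∧ (a = c ∨ r a c) := by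
  by_cases hbelow : ∃ b, P b ∧ r b c
  · obtain ⟨a₀, ⟨hP₀, hr₀⟩, hmin⟩ :=
      exists_minimalFor_of_wellFoundedLT (fun b => P b ∧ r b c) f hbelow
    have hle : ∀ b, P b → r b c → f a₀ ≤ f b := fun b hb hbc =>
      (le_total (f b) (f a₀)).elim (hmin ⟨hb, hbc⟩) id
    refine ⟨a₀, ⟨⟨hP₀, ?_⟩, Or.inr hr₀⟩, ?_⟩
    · rintro ⟨b, hb, hba⟩
      exact (hle b hb (htrans _ _ _ hb hP₀ hc hba hr₀)).not_gt (hf _ _ hba)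
    · rintro a ⟨⟨ha, hbelow_a⟩, rfl | hac⟩
      · exact absurd ⟨a₀, hP₀, hr₀⟩ hbelow_a
      · rcases (hle a ha hac).eq_or_lt with heq | hlt
        · exact hinj _ _ _ ha hP₀ hc hac hr₀ heq.symm
        · exact absurd ⟨a₀, hP₀, hinterp _ _ _ hP₀ ha hc hr₀ hac hlt⟩ hbelow_a
  · refine ⟨c, ⟨⟨hc, hbelow⟩, Or.inl rfl⟩, ?_⟩
    rintro a ⟨⟨ha, -⟩, rfl | hac⟩
    · rfl
    · exact absurd ⟨a, ha, hac⟩ hbelow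

namespace SimpleGraph.Walk

variable {G : SimpleGraph V}

theorem exists_darts_eq_append_cons {a b : V} (W : G.Walk a b) {d : G.Dart}
    (hd : d ∈ W.darts) :
    ∃ (W₁ : G.Walk a d.fst) (W₂ : G.Walk d.snd b), W.darts = W₁.darts ++ d :: W₂.darts := by
  induction W with
  | nil => simp at hd
  | cons h W ih =>
    rcases List.mem_cons.1 hd with rfl | hd
    · exact ⟨nil, W, rfl⟩
    · obtain ⟨W₁, W₂, hW⟩ := ih hd
      exact ⟨cons h W₁, W₂, by simp [hW]⟩

theorem exists_mem_darts_edge_eq {a b : V} {W : G.Walk a b} {e : Sym2 V} (he : e ∈ W.edges) :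
    ∃ d ∈ W.darts, d.edge = e :=
  List.mem_map.1 he

end SimpleGraph.Walk

open SimpleGraph

section Rside

variable {G : SimpleGraph V} {S T : Set V} {X Y : Finset (Sym2 V)}

theorem mem_Rside_of_mem_support {s w v : V} (hs : s ∈ S) (W : G.Walk s w)
    (hW : ∀ e ∈ W.edges, e ∉ X) (hv : v ∈ W.support) : v ∈ Rside G X S := by
  classical
  exact ⟨s, hs, ((W.takeUntil v hv).toDeleteEdges _ fun e he =>
    hW e (W.edges_takeUntil_subset_edges hv he)).reachable⟩

theorem notMem_Rside_of_mem_support (hX : EdgeCut G S T X) {u t v : V}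
    (ht : t ∈ T) (W : G.Walk u t) (hW : ∀ e ∈ W.edges, e ∉ X) (hv : v ∈ W.support) :
    v ∉ Rside G X S := by
  classical
  rintro ⟨s, hs, hsv⟩
  exact hX s hs t ht (hsv.trans ((W.dropUntil v hv).toDeleteEdges _ fun e he =>
    hW e (W.edges_dropUntil_subset_edges hv he)).reachable)

theorem Rside_subset_Rside (h : ∀ e ∈ Y, ∀ v ∈ e, v ∉ Rside G X S) :
    Rside G X S ⊆ Rside G Y S := by
  rintro v ⟨s, hs, hsv⟩
  refine ⟨s, hs, ?_⟩
  rw [reachable_iff_reflTransGen] at hsv ⊢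
  induction hsv with
  | refl => rfl
  | @tail b c hsb hbc ih =>
    obtain ⟨hbc, -⟩ := deleteEdges_adj.1 hbc
    have hbR : b ∈ Rside G X S := ⟨s, hs, (reachable_iff_reflTransGen _ _).2 hsb⟩
    exact ih.tail (deleteEdges_adj.2 ⟨hbc, fun hY => h _ hY b (Sym2.mem_mk_left b c) hbR⟩)

/-- A walk from `S` to `T` avoiding `X` leaves `R(Y, S)` for good at some edge of `Y`, whose
far endpoint lies in `V^T(Y)`; from there on it runs in `G` deprived of `R(Y, S)`. -/
theorem EdgeCut.of_deprive (hY : EdgeCut G S T Y)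
    (hX : EdgeCut (deprive G (Rside G Y S)) (nextSources G Y S) T X) : EdgeCut G S T X := by
  set R := Rside G Y S
  set H := (deprive G R).deleteEdges (X : Set (Sym2 V))
  intro s hs t ht hst
  have htR : t ∉ R := fun ⟨s', hs', hs't⟩ => hY s' hs' t ht hs't
  rw [reachable_iff_reflTransGen] at hst
  suffices key : ∀ u, Relation.ReflTransGen (G.deleteEdges X).Adj u t →
      (∃ v ∈ nextSources G Y S, H.Reachable v t) ∨ (u ∉ R ∧ H.Reachable u t) by
    obtain ⟨v, hv, hvt⟩ | ⟨hsR, -⟩ := key s hst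
    · exact hX v hv t ht hvt
    · exact hsR ⟨s, hs, Reachable.refl s⟩
  intro u hut
  induction hut using Relation.ReflTransGen.head_induction_on with
  | refl => exact Or.inr ⟨htR, Reachable.refl t⟩
  | @head u v huv _ ih =>
    obtain ⟨huv, huvX⟩ := deleteEdges_adj.1 huv
    obtain hnext | ⟨hvR, hvt⟩ := ih
    · exact Or.inl hnext
    by_cases huR : u ∈ R
    · have huvY : s(u, v) ∈ Y := by
        by_contra h
        obtain ⟨s', hs', hs'u⟩ := huR
        exact hvR ⟨s', hs', hs'u.trans (deleteEdges_adj.2 ⟨huv, h⟩).reachable⟩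
      exact Or.inl ⟨v, ⟨hvR, u, huvY⟩, hvt⟩
    · have huv' : (deprive G R).Adj u v := ⟨huv, huR, hvR⟩
      exact Or.inr ⟨huR, (deleteEdges_adj.2 ⟨huv', huvX⟩).reachable.trans hvt⟩

theorem MinEdgeCut.subset_edgeSet (hX : MinEdgeCut G S T X) : (X : Set (Sym2 V)) ⊆ G.edgeSet := by
  classical
  intro e heX
  by_contra he
  have hsame : G.deleteEdges ↑(X.erase e) = G.deleteEdges ↑X := by
    rw [deleteEdges_eq_inter_edgeSet, G.deleteEdges_eq_inter_edgeSet ↑X, Finset.coe_erase]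
    congr 1
    ext x
    simp only [Set.mem_inter_iff, Set.mem_sdiff, Set.mem_singleton_iff]
    exact ⟨fun hx => ⟨hx.1.1, hx.2⟩, fun hx => ⟨⟨hx.1, fun hxe => he (hxe ▸ hx.2)⟩, hx.2⟩⟩
  have hcut : EdgeCut G S T (X.erase e) := by
    simpa only [EdgeCut, hsame] using hX.1
  exact (Finset.card_erase_lt_of_mem heX).not_ge (hX.2 _ hcut)

end Rside

namespace IsDrainage

variable {G : SimpleGraph V} {S T : Set V} {p k : ℕ} {Z : ℕ → Finset (Sym2 V)}
  (hZ : IsDrainage G S T p k Z)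
include hZ

theorem card_eq {m : ℕ} (h1 : 1 ≤ m) (hk : m ≤ k) : (Z m).card = p := by
  obtain ⟨-, -, hcard₁, hsucc, -⟩ := hZ
  rcases h1.eq_or_lt with rfl | hlt
  · exact hcard₁
  · obtain ⟨n, rfl⟩ : ∃ n, m = n + 1 := ⟨m - 1, by omega⟩
    exact (hsucc n (by omega) (by omega)).2

theorem edgeCut {m : ℕ} (h1 : 1 ≤ m) (hk : m ≤ k) : EdgeCut G S T (Z m) := by
  obtain ⟨-, hZ₁, -, hsucc, -⟩ := hZ
  induction m with
  | zero => omega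
  | succ n ih =>
    rcases Nat.eq_zero_or_pos n with rfl | hn
    · exact hZ₁.1.1
    · exact (ih hn (by omega)).of_deprive (hsucc n hn (by omega)).1.1.1

theorem notMem_Rside_of_mem_succ {m : ℕ} (h1 : 1 ≤ m) (hk : m < k) {e : Sym2 V}
    (he : e ∈ Z (m + 1)) {v : V} (hv : v ∈ e) : v ∉ Rside G (Z m) S := by
  obtain ⟨w, rfl⟩ := Sym2.mem_iff_exists.1 hv
  exact ((hZ.2.2.2.1 m h1 hk).1.1.subset_edgeSet he).2.1

theorem Rside_mono {m m' : ℕ} (h1 : 1 ≤ m) (hmm' : m ≤ m') (hk : m' ≤ k) :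
    Rside G (Z m) S ⊆ Rside G (Z m') S := by
  induction m', hmm' using Nat.le_induction with
  | base => exact subset_rfl
  | succ n hmn ih =>
    exact (ih (by omega)).trans <| Rside_subset_Rside fun e he v hv =>
      hZ.notMem_Rside_of_mem_succ (by omega) (by omega) he hv

theorem notMem_Rside_of_lt {m m' : ℕ} (h1 : 1 ≤ m) (hlt : m < m') (hk : m' ≤ k)
    {e : Sym2 V} (he : e ∈ Z m') {v : V} (hv : v ∈ e) : v ∉ Rside G (Z m) S := by
  obtain ⟨n, rfl⟩ : ∃ n, m' = n + 1 := ⟨m' - 1, by omega⟩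
  exact fun hvR => hZ.notMem_Rside_of_mem_succ (by omega) (by omega) he hv
    (hZ.Rside_mono h1 (by omega) (by omega) hvR)

end IsDrainage

namespace MengerFamily

variable {G : SimpleGraph V} {S T : Set V} {p : ℕ} (M : MengerFamily G S T p)
  {X B B' : Finset (Sym2 V)}

section Crossing

variable (hX : EdgeCut G S T X) (hXp : X.card ≤ p)
include hX

theorem exists_mem_cut_mem_edges (j : Fin p) : ∃ e ∈ X, e ∈ (M.walk j).edges := by
  by_contra! h
  exact hX _ (M.ha j) _ (M.hb j)
    ((M.walk j).toDeleteEdges _ fun e he heX => h e heX he).reachable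

include hXp

/-- Pigeonhole: `p` edge-disjoint paths each meet the cut, which has at most `p` edges. -/
private theorem card_filter_mem_edges_eq_one [DecidableEq (Sym2 V)] :
    (∀ j, (X.filter (· ∈ (M.walk j).edges)).card = 1) ∧
      Finset.univ.biUnion (fun j => X.filter (· ∈ (M.walk j).edges)) = X :=
  Finset.card_eq_one_and_biUnion_eq_of_pairwiseDisjoint (fun _ => Finset.filter_subset _ _)
    (fun j => by simpa [Finset.Nonempty] using M.exists_mem_cut_mem_edges hX j)
    (fun i _ j _ hij => Finset.disjoint_filter.2 fun e _ hi hj => M.edgeDisj i j hij e hi hj)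
    (by simpa using hXp)

theorem exists_mem_edges_of_mem_cut {e : Sym2 V} (he : e ∈ X) : ∃ j, e ∈ (M.walk j).edges := by
  classical
  rw [← (M.card_filter_mem_edges_eq_one hX hXp).2] at he
  obtain ⟨j, -, hj⟩ := Finset.mem_biUnion.1 he
  exact ⟨j, (Finset.mem_filter.1 hj).2⟩

theorem eq_of_mem_cut_of_mem_edges {j : Fin p} {e e' : Sym2 V} (he : e ∈ X) (he' : e' ∈ X)
    (hej : e ∈ (M.walk j).edges) (he'j : e' ∈ (M.walk j).edges) : e = e' := by
  classical
  exact Finset.card_le_one.1 ((M.card_filter_mem_edges_eq_one hX hXp).1 j).le e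
    (Finset.mem_filter.2 ⟨he, hej⟩) e' (Finset.mem_filter.2 ⟨he', he'j⟩)

/-- Path `j` runs from `S` to `T` and meets `X` only at `d`. -/
theorem exists_darts_eq_append_cons_of_mem_cut {j : Fin p} {d : G.Dart}
    (hd : d ∈ (M.walk j).darts) (hdX : d.edge ∈ X) :
    ∃ (W₁ : G.Walk (M.a j) d.fst) (W₂ : G.Walk d.snd (M.b j)),
      (M.walk j).darts = W₁.darts ++ d :: W₂.darts ∧
        (∀ v ∈ W₁.support, v ∈ Rside G X S) ∧ ∀ v ∈ W₂.support, v ∉ Rside G X S := by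
  classical
  obtain ⟨W₁, W₂, hsplit⟩ := (M.walk j).exists_darts_eq_append_cons hd
  have hedges : (M.walk j).edges = W₁.edges ++ d.edge :: W₂.edges := by
    simp [Walk.edges, hsplit]
  have hnodup := (M.isPath j).isTrail.edges_nodup
  rw [hedges, List.nodup_middle, List.nodup_cons] at hnodup
  have hmem : ∀ e ∈ W₁.edges ++ W₂.edges, e ∈ (M.walk j).edges := fun e he => by
    rw [hedges]
    rcases List.mem_append.1 he with he | he <;> simp [he]
  have havoid : ∀ e ∈ W₁.edges ++ W₂.edges, e ∉ X := fun e he heX =>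
    hnodup.1 (M.eq_of_mem_cut_of_mem_edges hX hXp heX hdX (hmem e he) (by simp [hedges]) ▸ he)
  refine ⟨W₁, W₂, hsplit, fun v hv => ?_, fun v hv => ?_⟩
  · exact mem_Rside_of_mem_support (M.ha j) W₁ (fun e he => havoid e (by simp [he])) hv
  · exact notMem_Rside_of_mem_support hX (M.hb j) W₂ (fun e he => havoid e (by simp [he])) hv

theorem fst_mem_Rside_of_mem_cut {j : Fin p} {d : G.Dart} (hd : d ∈ (M.walk j).darts)
    (hdX : d.edge ∈ X) : d.fst ∈ Rside G X S := by
  obtain ⟨W₁, -, -, hW₁, -⟩ := M.exists_darts_eq_append_cons_of_mem_cut hX hXp hd hdX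
  exact hW₁ _ W₁.end_mem_support

theorem notMem_cut_of_mem_edges {j : Fin p} {x y : V} (W : G.Walk x y)
    (hW : W.darts ⊆ (M.walk j).darts) (hout : ∀ v ∈ W.support, v ∉ Rside G X S)
    {e : Sym2 V} (he : e ∈ W.edges) : e ∉ X := by
  obtain ⟨d, hd, rfl⟩ := W.exists_mem_darts_edge_eq he
  exact fun hdX => hout _ (W.dart_fst_mem_support_of_mem_darts hd)
    (M.fst_mem_Rside_of_mem_cut hX hXp (hW hd) hdX)

theorem mem_of_mem_sig (hB : B ⊆ X) {j : Fin p} {e : Sym2 V} (he : e ∈ X)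
    (hej : e ∈ (M.walk j).edges) (hj : j ∈ M.sig B) : e ∈ B := by
  obtain ⟨e', he'B, he'j⟩ := hj
  rwa [M.eq_of_mem_cut_of_mem_edges hX hXp he (hB he'B) hej he'j]

theorem subset_of_sig_subset (hB : B ⊆ X) (hB' : B' ⊆ X) (hsig : M.sig B ⊆ M.sig B') :
    B ⊆ B' := fun e he => by
  obtain ⟨j, hj⟩ := M.exists_mem_edges_of_mem_cut hX hXp (hB he)
  exact M.mem_of_mem_sig hX hXp hB' (hB he) hj (hsig ⟨e, he, hj⟩)

theorem eq_of_sig_eq (hB : B ⊆ X) (hB' : B' ⊆ X) (hsig : M.sig B = M.sig B') : B = B' :=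
  (M.subset_of_sig_subset hX hXp hB hB' hsig.le).antisymm
    (M.subset_of_sig_subset hX hXp hB' hB hsig.ge)

end Crossing

section Dry

theorem notMem_dryArea_iff {v : V} :
    v ∉ M.dryArea B ↔ ∃ s ∈ S, Relation.ReflTransGen (M.step B) s v := by
  simp [dryArea]

theorem notMem_dryArea_of_step {u v : V} (hu : u ∉ M.dryArea B) (huv : M.step B u v) :
    v ∉ M.dryArea B := by
  obtain ⟨s, hs, hsu⟩ := M.notMem_dryArea_iff.1 hu
  exact M.notMem_dryArea_iff.2 ⟨s, hs, hsu.tail huv⟩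

theorem step_of_mem_darts {j : Fin p} {d : G.Dart} (hd : d ∈ (M.walk j).darts)
    (hdB : d.edge ∉ B) : M.step B d.fst d.snd :=
  ⟨Or.inl ⟨j, d, hd, rfl⟩, hdB⟩

theorem mem_Estar_iff {e : Sym2 V} :
    e ∈ M.Estar B ↔ e ∈ G.edgeSet ∧ ∃ v ∈ e, v ∈ M.dryArea B := by
  constructor
  · rintro ⟨u, v, rfl, huv, hu, -⟩
    exact ⟨huv, u, Sym2.mem_mk_left u v, hu⟩
  · rintro ⟨he, u, hue, hu⟩
    obtain ⟨v, rfl⟩ := Sym2.mem_iff_exists.1 hue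
    refine ⟨u, v, rfl, he, hu, ?_⟩
    by_cases hv : v ∈ M.dryArea B
    · exact Or.inl (Or.inr hv)
    · exact Or.inr ⟨hv, u, Or.inr hu, he⟩

theorem notMem_dryArea_of_mem_support {j : Fin p} {x y : V} (W : G.Walk x y)
    (hW : W.darts ⊆ (M.walk j).darts) (hB : ∀ e ∈ W.edges, e ∉ B) (hx : x ∉ M.dryArea B) :
    ∀ v ∈ W.support, v ∉ M.dryArea B := by
  induction W with
  | nil => simpa using hx
  | @cons a b c h W ih =>
    have hab : M.step B a b := M.step_of_mem_darts (d := ⟨(a, b), h⟩) (hW (by simp))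
      (hB _ (by simp))
    simp only [Walk.support_cons, List.forall_mem_cons]
    exact ⟨hx, ih (fun d hd => hW (by simp [hd])) (fun e he => hB e (by simp [he]))
      (M.notMem_dryArea_of_step hx hab)⟩

theorem mem_sig_of_mem_Estar {j : Fin p} {e : Sym2 V} (he : e ∈ M.Estar B)
    (hej : e ∈ (M.walk j).edges) : j ∈ M.sig B := by
  by_contra hj
  have hwet := M.notMem_dryArea_of_mem_support (M.walk j) (List.Subset.refl _)
    (fun e he heB => hj ⟨e, heB, he⟩) (fun hdry => hdry ⟨M.a j, M.ha j, .refl⟩)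
  obtain ⟨v, hv, hvdry⟩ := (M.mem_Estar_iff.1 he).2
  obtain ⟨w, rfl⟩ := Sym2.mem_iff_exists.1 hv
  exact hwet v ((M.walk j).fst_mem_support_of_mem_edges hej) hvdry

theorem fst_mem_dryArea_of_mem_Estar {j : Fin p} {d : G.Dart} (hd : d ∈ (M.walk j).darts)
    (hE : d.edge ∈ M.Estar B) (hdB : d.edge ∉ B) : d.fst ∈ M.dryArea B := by
  by_contra hwet
  have hsnd := M.notMem_dryArea_of_step hwet (M.step_of_mem_darts hd hdB)
  obtain ⟨v, hv, hvdry⟩ := (M.mem_Estar_iff.1 hE).2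
  rcases Sym2.mem_iff.1 hv with rfl | rfl
  · exact hwet hvdry
  · exact hsnd hvdry

/-- A walk from `S` that is wet for `B` never crosses `E*(B)`, so it is also a walk avoiding
any `B' ⊆ E*(B)`. -/
theorem dryArea_subset_dryArea (hB' : (B' : Set (Sym2 V)) ⊆ M.Estar B) :
    M.dryArea B' ⊆ M.dryArea B := by
  intro v hv hwet
  obtain ⟨s, hs, hsv⟩ := hwet
  suffices hwet' : ∀ w, Relation.ReflTransGen (M.step B) s w →
      Relation.ReflTransGen (M.step B') s w from hv ⟨s, hs, hwet' v hsv⟩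
  intro w hsw
  induction hsw with
  | refl => exact .refl
  | @tail b c hsb hbc ih =>
    refine ih.tail ⟨hbc.1, fun hbcB' => ?_⟩
    have hb : b ∉ M.dryArea B := fun hb => hb ⟨s, hs, hsb⟩
    obtain ⟨x, hx, hxdry⟩ := (M.mem_Estar_iff.1 (hB' hbcB')).2
    rcases Sym2.mem_iff.1 hx with rfl | rfl
    · exact hb hxdry
    · exact M.notMem_dryArea_of_step hb hbc hxdry

end Dry

end MengerFamily

section Closer

variable {G : SimpleGraph V} {S T : Set V} {p k : ℕ} {Z : ℕ → Finset (Sym2 V)}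
  (hZ : IsDrainage G S T p k Z) (M : MengerFamily G S T p)
  {g h h₁ h₂ i : ℕ} {Bg Bh B₁ B₂ Bi : Finset (Sym2 V)}
include hZ M

theorem IsDrainage.exists_mem_darts_edge_eq {m : ℕ} (h1 : 1 ≤ m) (hk : m ≤ k) {e : Sym2 V}
    (he : e ∈ Z m) : ∃ j, ∃ d ∈ (M.walk j).darts, d.edge = e := by
  obtain ⟨j, hj⟩ := M.exists_mem_edges_of_mem_cut (hZ.edgeCut h1 hk) (hZ.card_eq h1 hk).le he
  exact ⟨j, Walk.exists_mem_darts_edge_eq hj⟩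

theorem IsDrainage.disjoint {m m' : ℕ} (h1 : 1 ≤ m) (hlt : m < m') (hk : m' ≤ k) :
    Disjoint (Z m) (Z m') := by
  rw [Finset.disjoint_left]
  intro e he he'
  obtain ⟨j, d, hd, rfl⟩ := hZ.exists_mem_darts_edge_eq M h1 (by omega) he
  exact hZ.notMem_Rside_of_lt h1 hlt hk he' (Sym2.mem_mk_left _ _)
    (M.fst_mem_Rside_of_mem_cut (hZ.edgeCut h1 (by omega)) (hZ.card_eq h1 (by omega)).le hd he)

theorem closer_of_forall_exists_mem_dryArea (hi : IsDam Z k i Bi) (hhi : h < i)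
    (hsig : M.sig Bh = M.sig Bi) (hdry : ∀ e ∈ Bi, ∃ v ∈ e, v ∈ M.dryArea Bh) :
    Closer M Z h i Bh Bi := by
  obtain ⟨hi1, hik, hBi, -⟩ := hi
  have hcut := hZ.edgeCut hi1 hik
  have hcard := (hZ.card_eq hi1 hik).le
  refine ⟨hhi, hsig, Set.Subset.antisymm ?_ fun e he => ⟨?_, hBi he⟩⟩
  · rintro e ⟨heE, heZ⟩
    obtain ⟨j, hj⟩ := M.exists_mem_edges_of_mem_cut hcut hcard heZ
    exact M.mem_of_mem_sig hcut hcard hBi heZ hj (hsig ▸ M.mem_sig_of_mem_Estar heE hj)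
  · obtain ⟨j, hj⟩ := M.exists_mem_edges_of_mem_cut hcut hcard (hBi he)
    exact M.mem_Estar_iff.2 ⟨(M.walk j).edges_subset_edgeSet hj, hdry e he⟩

theorem Closer.trans (hh : IsDam Z k h Bh) (hi : IsDam Z k i Bi)
    (hgh : Closer M Z g h Bg Bh) (hhi : Closer M Z h i Bh Bi) : Closer M Z g i Bg Bi := by
  refine closer_of_forall_exists_mem_dryArea hZ M hi (hgh.1.trans hhi.1)
    (hgh.2.1.trans hhi.2.1) fun e he => ?_
  obtain ⟨j, d, hd, rfl⟩ := hZ.exists_mem_darts_edge_eq M hi.1 hi.2.1 (hi.2.2.1 he)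
  have hdBh : d.edge ∉ Bh := fun hBh =>
    Finset.disjoint_left.1 (hZ.disjoint M hh.1 hhi.1 hi.2.1) (hh.2.2.1 hBh) (hi.2.2.1 he)
  have hdry := M.fst_mem_dryArea_of_mem_Estar hd (hhi.2.2.symm.subset he).1 hdBh
  exact ⟨d.fst, Sym2.mem_mk_left _ _,
    M.dryArea_subset_dryArea (fun e he => (hgh.2.2.symm.subset he).1) hdry⟩

/-- Otherwise the water would follow path `j` past `Z h₂` to its `Bᵢ`-edge, which lies in
`E*(B₁)` and so has a dry endpoint. -/
theorem fst_mem_dryArea_of_closer (h₁B : IsDam Z k h₁ B₁) (hi : IsDam Z k i Bi)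
    (hcl : Closer M Z h₁ i B₁ Bi) (h₁₂ : h₁ < h₂) (h₂i : h₂ < i) {j : Fin p}
    (hj : j ∈ M.sig Bi) {d : G.Dart} (hd : d ∈ (M.walk j).darts) (hdZ : d.edge ∈ Z h₂) :
    d.fst ∈ M.dryArea B₁ := by
  obtain ⟨h₁1, -, hB₁, -⟩ := h₁B
  obtain ⟨-, hik, hBi, -⟩ := hi
  by_contra hwet
  obtain ⟨e, heBi, hej⟩ := hj
  obtain ⟨di, hdi, rfl⟩ := Walk.exists_mem_darts_edge_eq hej
  obtain ⟨W₁, W₂, hsplit, hW₁, hW₂⟩ := M.exists_darts_eq_append_cons_of_mem_cut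
    (hZ.edgeCut (by omega) (by omega)) (hZ.card_eq (by omega) (by omega)).le hd hdZ
  have hW₂sub : W₂.darts ⊆ (M.walk j).darts := fun d' hd' => by simp [hsplit, hd']
  have hdiW₂ : di ∈ W₂.darts := by
    rw [hsplit] at hdi
    rcases List.mem_append.1 hdi with hdi | hdi
    · exact absurd (hW₁ _ (W₁.dart_snd_mem_support_of_mem_darts hdi))
        (hZ.notMem_Rside_of_lt (by omega) h₂i hik (hBi heBi) (Sym2.mem_mk_right _ _))
    rcases List.mem_cons.1 hdi with rfl | hdi
    · exact absurd (hBi heBi)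
        (Finset.disjoint_left.1 (hZ.disjoint M (by omega) h₂i hik) hdZ)
    · exact hdi
  have hZ₁₂ := hZ.disjoint M h₁1 h₁₂ (by omega)
  have hW₂B₁ : ∀ e ∈ W₂.edges, e ∉ B₁ := fun e he heB₁ =>
    M.notMem_cut_of_mem_edges (hZ.edgeCut h₁1 (by omega)) (hZ.card_eq h₁1 (by omega)).le W₂
      hW₂sub (fun v hv hvR => hW₂ v hv (hZ.Rside_mono h₁1 h₁₂.le (by omega) hvR)) he (hB₁ heB₁)
  have hsnd : d.snd ∉ M.dryArea B₁ := M.notMem_dryArea_of_step hwet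
    (M.step_of_mem_darts hd fun hdB₁ => Finset.disjoint_left.1 hZ₁₂ (hB₁ hdB₁) hdZ)
  have hwetW₂ := M.notMem_dryArea_of_mem_support W₂ hW₂sub hW₂B₁ hsnd
  obtain ⟨v, hv, hvdry⟩ := (M.mem_Estar_iff.1 (hcl.2.2.symm.subset heBi).1).2
  rcases Sym2.mem_iff.1 hv with rfl | rfl
  · exact hwetW₂ _ (W₂.dart_fst_mem_support_of_mem_darts hdiW₂) hvdry
  · exact hwetW₂ _ (W₂.dart_snd_mem_support_of_mem_darts hdiW₂) hvdry

theorem Closer.of_lt (h₁B : IsDam Z k h₁ B₁) (h₂B : IsDam Z k h₂ B₂) (hi : IsDam Z k i Bi)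
    (hcl₁ : Closer M Z h₁ i B₁ Bi) (hcl₂ : Closer M Z h₂ i B₂ Bi) (h₁₂ : h₁ < h₂) :
    Closer M Z h₁ h₂ B₁ B₂ := by
  refine closer_of_forall_exists_mem_dryArea hZ M h₂B h₁₂ (hcl₁.2.1.trans hcl₂.2.1.symm)
    fun e he => ?_
  obtain ⟨h₂1, h₂k, hB₂, -⟩ := h₂B
  obtain ⟨j, d, hd, rfl⟩ := hZ.exists_mem_darts_edge_eq M h₂1 h₂k (hB₂ he)
  exact ⟨d.fst, Sym2.mem_mk_left _ _, fst_mem_dryArea_of_closer hZ M h₁B hi hcl₁ h₁₂ hcl₂.1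
    (hcl₂.2.1 ▸ ⟨_, he, List.mem_map_of_mem hd⟩) hd (hB₂ he)⟩

theorem Closer.eq (h₁B : IsDam Z k h B₁) (h₂B : IsDam Z k h B₂) (hcl₁ : Closer M Z h i B₁ Bi)
    (hcl₂ : Closer M Z h i B₂ Bi) : B₁ = B₂ :=
  M.eq_of_sig_eq (hZ.edgeCut h₁B.1 h₁B.2.1) (hZ.card_eq h₁B.1 h₁B.2.1).le h₁B.2.2.1 h₂B.2.2.1
    (hcl₁.2.1.trans hcl₂.2.1.symm)

end Closer

theorem unique_closest_dam_general
    (G : SimpleGraph V) (S T : Set V)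
    (p k : ℕ) (Z : ℕ → Finset (Sym2 V))
    (hZ : IsDrainage G S T p k Z) (M : MengerFamily G S T p)
    (i : ℕ) (B : Finset (Sym2 V)) (hB : IsDam Z k i B) :
    ∃! q : ℕ × Finset (Sym2 V),
      ClosestDam M Z k q.1 q.2 ∧ (q = (i, B) ∨ Closer M Z q.1 i q.2 B) := by
  have key := existsUnique_minimal_of_graded (fun q : ℕ × Finset (Sym2 V) => IsDam Z k q.1 q.2)
    (fun a b => Closer M Z a.1 b.1 a.2 b.2) Prod.fst (fun _ _ hab => hab.1)
    (fun _ _ _ _ hb hc hab hbc => hab.trans hZ M hb hc hbc)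
    (fun _ _ _ ha hb hc hac hbc hlt => hac.of_lt hZ M ha hb hc hbc hlt)
    (fun a b _ ha hb _ hac hbc hab => by
      obtain ⟨h, A⟩ := a
      obtain ⟨h', A'⟩ := b
      obtain rfl : h = h' := hab
      exact Prod.ext rfl (hac.eq hZ M ha hb hbc))
    (c := (i, B)) hB
  simpa only [ClosestDam, Prod.exists] using key

/-- Every dam has a unique closest dam: either the dam itself is a
closest dam, or there is exactly one closest dam closer than it. -/
theorem unique_closest_dam
    [Fintype V] (G : SimpleGraph V) (S T : Set V)
    (hST : Disjoint S T) (hS : S.Nonempty) (hT : T.Nonempty)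
    (p k : ℕ) (Z : ℕ → Finset (Sym2 V))
    (hmin : ∃ X0 : Finset (Sym2 V), MinEdgeCut G S T X0 ∧ X0.card = p)
    (hZ : IsDrainage G S T p k Z) (M : MengerFamily G S T p)
    (i : ℕ) (B : Finset (Sym2 V)) (hB : IsDam Z k i B) :
    ∃! q : ℕ × Finset (Sym2 V),
      ClosestDam M Z k q.1 q.2 ∧ (q = (i, B) ∨ Closer M Z q.1 i q.2 B) :=
  unique_closest_dam_general G S T p k Z hZ M i B hB
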